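/- Let p be a prime, G a finite group, S a Sylow p-subgroup of G, P ≤ S a subgroup, and φ: P → S an injective group homomorphism (not assumed to be induced by conjugation in G). Let Q be a normal subgroup of P and set ψ = φ|_Q. Suppose that there exists g ∈ G with gxg⁻¹ = ψ(x) for all x ∈ Q, and that φ(Q) is fully centralized, i.e. |C_S(φ(Q))| ≥ |C_S(g'φ(Q)g'⁻¹)| for every g' ∈ G with g'φ(Q)g'⁻¹ ≤ S. Then there exists h ∈ G such that hxh⁻¹ = ψ(x) for all x ∈ Q and hPh⁻¹ is contained in the subgroup φ(P)·C_S(φ(Q)) of S. -/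

import Mathlib

/-!
Since `φ(Q)` is fully centralized, `C = C_S(φ(Q))` is a Sylow `p`-subgroup of
`D = C_G(φ(Q))`: a `p`-subgroup `E ≥ C` of `D` can be conjugated together with `φ(Q)` into `S`
by some `u`, and then `|E| ≤ |C_S(uφ(Q)u⁻¹)| ≤ |C|`. As `φ(P)` normalizes `D` and `C`, `φ(P)C`
is then Sylow in `φ(P)D`. For `x ∈ P`, `gxg⁻¹` and `φ(x)` act alike on `φ(Q)`, so
`gPg⁻¹ ≤ φ(P)D`, and Sylow's theorem in `φ(P)D` gives `k = ad` (`a ∈ φ(P)`, `d ∈ D`) with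
`k(gPg⁻¹)k⁻¹ ≤ φ(P)C`. Then `h = dg` works: `d` centralizes `φ(Q)`, and
`hPh⁻¹ = a⁻¹(kgPg⁻¹k⁻¹)a ≤ φ(P)C`.
-/

open scoped Pointwise

/-- The conjugate `gQg⁻¹` of a subgroup. -/
def conjSub {G : Type} [Group G] (g : G) (Q : Subgroup G) : Subgroup G :=
  Subgroup.map (MulAut.conj g).toMonoidHom Q

open Subgroup

section

variable {G : Type} [Group G] {p : ℕ}

lemma mem_conjSub {g x : G} {R : Subgroup G} :
    x ∈ conjSub g R ↔ ∃ y ∈ R, g * y * g⁻¹ = x :=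
  Iff.rfl

lemma card_conjSub (g : G) (R : Subgroup G) : Nat.card (conjSub g R) = Nat.card R :=
  card_map_of_injective (f := (MulAut.conj g).toMonoidHom) (MulAut.conj g).injective

lemma conjSub_le_centralizer {g : G} {E R : Subgroup G} (h : E ≤ centralizer (R : Set G)) :
    conjSub g E ≤ centralizer (conjSub g R : Set G) := by
  rintro _ ⟨e, he, rfl⟩
  rw [mem_centralizer_iff]
  rintro _ ⟨y, hy, rfl⟩
  simp only [MulEquiv.coe_toMonoidHom, MulAut.conj_apply]
  calc g * y * g⁻¹ * (g * e * g⁻¹) = g * (y * e) * g⁻¹ := by group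
    _ = g * e * g⁻¹ * (g * y * g⁻¹) := by rw [mem_centralizer_iff.1 (h he) y hy]; group

lemma normalizer_le_normalizer_centralizer (H : Subgroup G) :
    normalizer (H : Set G) ≤ normalizer (centralizer (H : Set G) : Set G) := by
  intro g hg
  rw [mem_normalizer_iff]
  intro z
  simp only [SetLike.mem_coe, mem_centralizer_iff]
  constructor
  · intro hz y hy
    have hy' : g⁻¹ * y * g ∈ H := (mem_normalizer_iff''.1 hg y).1 hy
    have := hz _ hy'
    calc y * (g * z * g⁻¹) = g * ((g⁻¹ * y * g) * z) * g⁻¹ := by group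
      _ = (g * z * g⁻¹) * y := by rw [this]; group
  · intro hz y hy
    have hy' : g * y * g⁻¹ ∈ H := (mem_normalizer_iff.1 hg y).1 hy
    have := hz _ hy'
    calc y * z = g⁻¹ * ((g * y * g⁻¹) * (g * z * g⁻¹)) * g := by group
      _ = z * y := by rw [this]; group

/-- `T` is a Sylow `p`-subgroup of `K`, stated inside `G` (by maximality, as for `Sylow`) to avoid
moving between subgroups of `K` and of `G`. -/
structure IsSylowIn (p : ℕ) (K T : Subgroup G) : Prop where
  isPGroup : IsPGroup p T
  le : T ≤ K
  eq_of_le : ∀ R : Subgroup G, IsPGroup p R → T ≤ R → R ≤ K → R = T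

def IsFullyCentralized (S R : Subgroup G) : Prop :=
  ∀ g' : G, (∀ y ∈ R, g' * y * g'⁻¹ ∈ S) →
    Nat.card (S ⊓ centralizer (conjSub g' R : Set G) : Subgroup G) ≤
      Nat.card (S ⊓ centralizer (R : Set G) : Subgroup G)

lemma Sylow.isSylowIn_top (S : Sylow p G) : IsSylowIn p ⊤ (S : Subgroup G) :=
  ⟨S.isPGroup', le_top, fun _ hR hSR _ => S.is_maximal' hR hSR⟩

namespace IsSylowIn

lemma sup {A C D : Subgroup G} (hC : IsSylowIn p D C) (hAD : A ≤ normalizer (D : Set G))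
    (hAC : IsPGroup p ↥(A ⊔ C)) : IsSylowIn p (A ⊔ D) (A ⊔ C) := by
  refine ⟨hAC, sup_le_sup_left hC.le A, fun R hR hCR hRD => le_antisymm ?_ hCR⟩
  intro r hr
  obtain ⟨a, ha, d, hd, rfl⟩ : r ∈ (A : Set G) * D := by
    rw [← coe_mul_of_left_le_normalizer_right A D hAD]; exact hRD hr
  have haR : a ∈ R := hCR (mem_sup_left ha)
  have hRDC : R ⊓ D = C :=
    hC.eq_of_le _ (hR.to_le inf_le_left) (le_inf (le_sup_right.trans hCR) hC.le) inf_le_right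
  have hdC : d ∈ C := by
    rw [← hRDC]
    exact ⟨by simpa using mul_mem (inv_mem haR) hr, hd⟩
  exact mul_mem (mem_sup_left ha) (mem_sup_right hdC)

variable [Finite G] [Fact p.Prime] {K T : Subgroup G}

lemma exists_conjSub_le (hT : IsSylowIn p K T) {X : Subgroup G} (hX : IsPGroup p X)
    (hXK : X ≤ K) : ∃ k ∈ K, conjSub k X ≤ T := by
  obtain ⟨R, hXR⟩ := (hX.comap_subtype (K := K)).exists_le_sylow
  obtain ⟨R', hTR'⟩ := (hT.isPGroup.comap_subtype (K := K)).exists_le_sylow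
  obtain ⟨k, rfl⟩ := MulAction.exists_smul_eq K R R'
  have hR'T : (k • R : Sylow p K).map K.subtype = T := by
    refine hT.eq_of_le _ ((k • R).isPGroup'.map _) ?_ (map_subtype_le _)
    intro t ht
    exact ⟨⟨t, hT.le ht⟩, hTR' (mem_subgroupOf.2 ht), rfl⟩
  refine ⟨k, k.2, ?_⟩
  rintro _ ⟨x, hx, rfl⟩
  rw [← hR'T]
  exact ⟨k * ⟨x, hXK hx⟩ * k⁻¹,
    smul_mem_pointwise_smul _ (MulAut.conj k) (R : Subgroup K) (hXR hx), rfl⟩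

end IsSylowIn

lemma IsFullyCentralized.isSylowIn_centralizer [Finite G] [Fact p.Prime] {S : Sylow p G}
    {R : Subgroup G} (hRS : R ≤ S) (hR : IsFullyCentralized S R) :
    IsSylowIn p (centralizer (R : Set G)) ((S : Subgroup G) ⊓ centralizer (R : Set G)) := by
  refine ⟨S.isPGroup'.to_le inf_le_left, inf_le_right, fun E hE hCE hED => ?_⟩
  have hER : IsPGroup p ↥(E ⊔ R) :=
    hE.to_sup_of_normal_right' (S.isPGroup'.to_le hRS) (hED.trans (centralizer_le_normalizer _))
  obtain ⟨u, -, hu⟩ := S.isSylowIn_top.exists_conjSub_le hER le_top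
  have huR : ∀ y ∈ R, u * y * u⁻¹ ∈ S := fun y hy => hu ⟨y, mem_sup_right hy, rfl⟩
  have huE : conjSub u E ≤ (S : Subgroup G) ⊓ centralizer (conjSub u R : Set G) :=
    le_inf ((map_mono le_sup_left).trans hu) (conjSub_le_centralizer hED)
  refine eq_of_le_of_card_ge hCE ?_ |>.symm
  calc Nat.card E = Nat.card (conjSub u E) := (card_conjSub u E).symm
    _ ≤ Nat.card ((S : Subgroup G) ⊓ centralizer (conjSub u R : Set G) : Subgroup G) :=
      card_le_of_le huE
    _ ≤ _ := hR u huR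

lemma inv_mul_conj_mem_centralizer_map {P Q : Subgroup G} [(Q.subgroupOf P).Normal]
    (Φ : P →* G) {g : G} (hg : ∀ y : P, (y : G) ∈ Q → g * y * g⁻¹ = Φ y) (x : P) :
    (Φ x)⁻¹ * (g * x * g⁻¹) ∈ centralizer (map Φ (Q.subgroupOf P) : Set G) := by
  rintro _ ⟨q, hq, rfl⟩
  have hxq : x * q * x⁻¹ ∈ Q.subgroupOf P := Normal.conj_mem ‹_› q hq x
  have key : Φ x * Φ q * (Φ x)⁻¹ = (g * x * g⁻¹) * Φ q * (g * x * g⁻¹)⁻¹ := by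
    calc Φ x * Φ q * (Φ x)⁻¹ = Φ (x * q * x⁻¹) := by rw [map_mul, map_mul, map_inv]
      _ = g * (x * q * x⁻¹ : P) * g⁻¹ := (hg (x * q * x⁻¹) hxq).symm
      _ = _ := by rw [← hg q hq]; push_cast; group
  calc Φ q * ((Φ x)⁻¹ * (g * x * g⁻¹))
      = (Φ x)⁻¹ * (Φ x * Φ q * (Φ x)⁻¹) * (g * x * g⁻¹) := by group
    _ = (Φ x)⁻¹ * (g * x * g⁻¹) * Φ q := by rw [key]; group

lemma conjSub_le_map_top_sup_centralizer {P Q : Subgroup G} [(Q.subgroupOf P).Normal]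
    (Φ : P →* G) {g : G} (hg : ∀ y : P, (y : G) ∈ Q → g * y * g⁻¹ = Φ y) :
    conjSub g P ≤ map Φ ⊤ ⊔ centralizer (map Φ (Q.subgroupOf P) : Set G) := by
  intro _ hy
  obtain ⟨x, hx, rfl⟩ := mem_conjSub.1 hy
  rw [← mul_inv_cancel_left (Φ ⟨x, hx⟩) (g * x * g⁻¹)]
  exact mul_mem_sup ⟨⟨x, hx⟩, trivial, rfl⟩
    (inv_mul_conj_mem_centralizer_map Φ hg ⟨x, hx⟩)

end

theorem extension_lemma_general
    (p : ℕ) [Fact p.Prime] (G : Type) [Group G] [Finite G]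
    (S : Sylow p G) (P : Subgroup G) (hPS : P ≤ (S : Subgroup G))
    (φ : ↥P →* ↥(S : Subgroup G))
    (Q : Subgroup G) (hQP : Q ≤ P)
    (hQnormal : ∀ g ∈ P, ∀ x ∈ Q, g * x * g⁻¹ ∈ Q)
    -- the `G`-level homomorphism associated to `φ` and its images `φ(P)` and `φ(Q)`
    (Φ : ↥P →* G) (hΦ : Φ = ((S : Subgroup G).subtype).comp φ)
    (φP φQ : Subgroup G) (hφP : φP = Subgroup.map Φ ⊤)
    (hφQ : φQ = Subgroup.map Φ (Q.subgroupOf P))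
    -- `ψ = φ|_Q` is realized by conjugation by some `g ∈ G`
    (g : G) (hg : ∀ (x : G) (hx : x ∈ Q), g * x * g⁻¹ = Φ ⟨x, hQP hx⟩)
    -- `φ(Q)` is fully centralized
    (hfullcent : ∀ g' : G, (∀ y ∈ φQ, g' * y * g'⁻¹ ∈ (S : Subgroup G)) →
      Nat.card ((S : Subgroup G) ⊓ Subgroup.centralizer ((conjSub g' φQ : Subgroup G) : Set G) : Subgroup G) ≤
        Nat.card ((S : Subgroup G) ⊓ Subgroup.centralizer ((φQ : Subgroup G) : Set G) : Subgroup G)) :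
    ∃ h : G, (∀ (x : G) (hx : x ∈ Q), h * x * h⁻¹ = Φ ⟨x, hQP hx⟩) ∧
      ∀ x ∈ P, h * x * h⁻¹ ∈
        (φP : Set G) * (((S : Subgroup G) ⊓
          Subgroup.centralizer ((φQ : Subgroup G) : Set G) : Subgroup G) : Set G) := by
  have : (Q.subgroupOf P).Normal := ⟨fun q hq x => hQnormal x x.2 q hq⟩
  have hφPS : φP ≤ S := by rw [hφP, hΦ]; rintro _ ⟨y, -, rfl⟩; exact (φ y).2
  have hφPD : φP ≤ normalizer (centralizer (φQ : Set G) : Set G) := by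
    rw [hφP, hφQ, ← normalizer_eq_top (H := Q.subgroupOf P)]
    exact (le_normalizer_map Φ).trans (normalizer_le_normalizer_centralizer _)
  have hX : conjSub g P ≤ φP ⊔ centralizer (φQ : Set G) := by
    rw [hφP, hφQ]; exact conjSub_le_map_top_sup_centralizer Φ fun y hy => hg y hy
  set D := centralizer (φQ : Set G)
  set C : Subgroup G := S ⊓ D
  have hφPC : φP ≤ normalizer (C : Set G) :=
    (le_inf (hφPS.trans le_normalizer) hφPD).trans inf_normalizer_le_normalizer_inf
  have hT : IsSylowIn p (φP ⊔ D) (φP ⊔ C) :=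
    (IsFullyCentralized.isSylowIn_centralizer (hφQ ▸ (map_mono le_top).trans (hφP ▸ hφPS))
      hfullcent).sup hφPD (S.isPGroup'.to_le (sup_le hφPS inf_le_left))
  obtain ⟨k, hk, hkX⟩ := hT.exists_conjSub_le ((S.isPGroup'.to_le hPS).map _) hX
  obtain ⟨a, ha, d, hd, rfl⟩ : k ∈ (φP : Set G) * D := by
    rwa [← coe_mul_of_left_le_normalizer_right _ _ hφPD]
  refine ⟨d * g, fun x hx => ?_, fun x hx => ?_⟩
  · have hxφQ : Φ ⟨x, hQP hx⟩ ∈ φQ := hφQ ▸ ⟨⟨x, hQP hx⟩, hx, rfl⟩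
    calc d * g * x * (d * g)⁻¹ = d * (g * x * g⁻¹) * d⁻¹ := by group
      _ = Φ ⟨x, hQP hx⟩ := by rw [hg x hx, ← mem_centralizer_iff.1 hd _ hxφQ]; group
  · have haT : a ∈ φP ⊔ C := mem_sup_left ha
    have e : d * g * x * (d * g)⁻¹ = a⁻¹ * (a * d * (g * x * g⁻¹) * (a * d)⁻¹) * a := by group
    rw [← coe_mul_of_left_le_normalizer_right _ _ hφPC, e]
    exact mul_mem (mul_mem (inv_mem haT) (hkX ⟨_, ⟨x, hx, rfl⟩, rfl⟩)) haT

/-- **Extension lemma (variant of the extension axiom).** Let `S` be a Sylow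
`p`-subgroup of the finite group `G`, `P ≤ S`, and `φ : P → S` an injective
homomorphism. Let `Q ⊴ P` and `ψ = φ|_Q`. If `ψ` is realized by conjugation by some
`g ∈ G` and `φ(Q)` is fully centralized, then there is `h ∈ G` realizing `ψ` by
conjugation with `hPh⁻¹ ⊆ φ(P)·C_S(φ(Q))`. -/
theorem extension_lemma
    (p : ℕ) [Fact p.Prime] (G : Type) [Group G] [Finite G]
    (S : Sylow p G) (P : Subgroup G) (hPS : P ≤ (S : Subgroup G))
    (φ : ↥P →* ↥(S : Subgroup G)) (hφinj : Function.Injective φ)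
    (Q : Subgroup G) (hQP : Q ≤ P)
    (hQnormal : ∀ g ∈ P, ∀ x ∈ Q, g * x * g⁻¹ ∈ Q)
    -- the `G`-level homomorphism associated to `φ` and its images `φ(P)` and `φ(Q)`
    (Φ : ↥P →* G) (hΦ : Φ = ((S : Subgroup G).subtype).comp φ)
    (φP φQ : Subgroup G) (hφP : φP = Subgroup.map Φ ⊤)
    (hφQ : φQ = Subgroup.map Φ (Q.subgroupOf P))
    -- `ψ = φ|_Q` is realized by conjugation by some `g ∈ G`
    (g : G) (hg : ∀ (x : G) (hx : x ∈ Q), g * x * g⁻¹ = Φ ⟨x, hQP hx⟩)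
    -- `φ(Q)` is fully centralized
    (hfullcent : ∀ g' : G, (∀ y ∈ φQ, g' * y * g'⁻¹ ∈ (S : Subgroup G)) →
      Nat.card ((S : Subgroup G) ⊓ Subgroup.centralizer ((conjSub g' φQ : Subgroup G) : Set G) : Subgroup G) ≤
        Nat.card ((S : Subgroup G) ⊓ Subgroup.centralizer ((φQ : Subgroup G) : Set G) : Subgroup G)) :
    ∃ h : G, (∀ (x : G) (hx : x ∈ Q), h * x * h⁻¹ = Φ ⟨x, hQP hx⟩) ∧
      ∀ x ∈ P, h * x * h⁻¹ ∈
        (φP : Set G) * (((S : Subgroup G) ⊓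
          Subgroup.centralizer ((φQ : Subgroup G) : Set G) : Subgroup G) : Set G) :=
  extension_lemma_general p G S P hPS φ Q hQP hQnormal Φ hΦ φP φQ hφP hφQ g hg hfullcent
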